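/- arXiv:1408.1687 — 3 statements merged into one kernel-verified Lean document; each statement's English description precedes it below -/
import Mathlib

section
/- Let R be a ring in which 2 is invertible, and suppose a - a³ = (a - a³)s(a - a³) for some s ∈ R. Then c = 1 + a is regular; explicitly c = czc where z = 3/2 - c/2 + (1-c)(1-c/2)(-2s)(1-c)(1-c/2). -/
noncomputable section

namespace SepExchange

variable (R : Type) [Ring R]

/-- The right annihilator `r(a)` as a right `R`-submodule of `R`. -/
def rAnn (a : R) : Submodule Rᵐᵒᵖ R where
  carrier := {x | a * x = 0}
  add_mem' := by intro x y hx hy; simp_all [Set.mem_setOf_eq, mul_add]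
  zero_mem' := by simp
  smul_mem' := by
    intro c x hx
    simp only [Set.mem_setOf_eq, MulOpposite.smul_eq_mul_unop] at *
    rw [← mul_assoc, hx, zero_mul]

/-- The principal right ideal `aR` as a right `R`-submodule of `R`. -/
def rIdeal (a : R) : Submodule Rᵐᵒᵖ R := Submodule.span Rᵐᵒᵖ {a}

/-- The right `R`-module `a·r(a²) = {a*t : a²*t = 0}`. -/
def arAnn2 (a : R) : Submodule Rᵐᵒᵖ R where
  carrier := {x | ∃ t, x = a * t ∧ a ^ 2 * t = 0}
  add_mem' := by
    rintro x y ⟨t1, rfl, h1⟩ ⟨t2, rfl, h2⟩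
    exact ⟨t1 + t2, by rw [mul_add], by rw [mul_add, h1, h2, add_zero]⟩
  zero_mem' := ⟨0, by simp, by simp⟩
  smul_mem' := by
    rintro c x ⟨t, rfl, ht⟩
    refine ⟨t * c.unop, ?_, ?_⟩
    · simp only [MulOpposite.smul_eq_mul_unop, MulOpposite.unop_op, mul_assoc]
    · rw [← mul_assoc, ht, zero_mul]

/-- `R` is an exchange ring: for each `a` there is an idempotent `e ∈ aR`
with `1 - e ∈ (1-a)R`. -/
def ExchangeRing : Prop :=
  ∀ a : R, ∃ e : R, IsIdempotentElem e ∧ (∃ r, e = a * r) ∧ (∃ s, (1 : R) - e = (1 - a) * s)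

/-- `R` is separative: `A⊕A ≅ A⊕B ≅ B⊕B ⟹ A ≅ B` for finitely generated
projective right `R`-modules. -/
def Separative : Prop :=
  ∀ (A B : Type) [AddCommGroup A] [Module Rᵐᵒᵖ A] [AddCommGroup B] [Module Rᵐᵒᵖ B],
    Module.Finite Rᵐᵒᵖ A → Module.Projective Rᵐᵒᵖ A →
    Module.Finite Rᵐᵒᵖ B → Module.Projective Rᵐᵒᵖ B →
    Nonempty ((A × A) ≃ₗ[Rᵐᵒᵖ] (A × B)) → Nonempty ((A × B) ≃ₗ[Rᵐᵒᵖ] (B × B)) →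
    Nonempty (A ≃ₗ[Rᵐᵒᵖ] B)

/-- `a` is unit-regular. -/
def IsUnitRegular (a : R) : Prop := ∃ u : Rˣ, a = a * (u : R) * a

/-- `a` is special clean: there is an idempotent `e` with `a - e` a unit and
`aR ∩ eR = 0`. -/
def IsSpecialClean (a : R) : Prop :=
  ∃ e : R, IsIdempotentElem e ∧ IsUnit (a - e) ∧ rIdeal R a ⊓ rIdeal R e = ⊥

/-- `A ≲⊕ B`: `A` is isomorphic to a direct summand of `B` (right `R`-modules). -/
def SummandOf (A B : Type) [AddCommGroup A] [Module Rᵐᵒᵖ A]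
    [AddCommGroup B] [Module Rᵐᵒᵖ B] : Prop :=
  ∃ N N' : Submodule Rᵐᵒᵖ B, IsCompl N N' ∧ Nonempty (A ≃ₗ[Rᵐᵒᵖ] ↥N)

/-- `A ∝ B`: `A` is isomorphic to a direct summand of a finite direct sum of
copies of `B`. -/
def Propto (A B : Type) [AddCommGroup A] [Module Rᵐᵒᵖ A]
    [AddCommGroup B] [Module Rᵐᵒᵖ B] : Prop :=
  ∃ m : ℕ, 0 < m ∧ SummandOf R A (Fin m → B)

end SepExchange

/-!
With `c = 1 + a` and `x = a - a³`, one has `c (3 - c) c = 2c + x`, while `q = (1 - c)(2 - c)`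
satisfies `c q = q c = -x`. Since `x = x s x`, subtracting `q s q` from `3 - c` cancels the
defect `x`, so `N = 3 - c - q s q` satisfies `c N c = 2c`, and `N / 2` is an inner inverse of `c`.
The formula of the statement is `N / 2` written out.
-/

section

variable {R : Type*} [Ring R]

theorem eq_mul_sub_mul_mul_mul_of_defect {c z q x s m : R} (hx : x = x * s * x)
    (hz : c * z * c = m + x) (hl : c * q = -x) (hr : q * c = -x) :
    m = c * (z - q * s * q) * c := by
  have expand : c * (z - q * s * q) * c = c * z * c - c * q * s * (q * c) := by noncomm_ring
  rw [expand, hz, hl, hr, neg_mul, neg_mul_neg, ← hx, add_sub_cancel_right]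

variable [Invertible (2 : R)]

theorem eq_mul_mul_invOf_two_mul {c n : R} (h : 2 * c = c * n * c) :
    c = c * (n * ⅟2) * c := by
  have central (x : R) : ⅟2 * x = x * ⅟2 := (Commute.ofNat_right x 2).invOf_right.symm.eq
  rw [← mul_assoc, mul_assoc _ _ c, central, ← mul_assoc, ← h, mul_assoc, ← central,
    mul_invOf_cancel_left]

theorem three_mul_invOf_two_sub_add_eq_mul_invOf_two (c s : R) :
    (3 : R) * ⅟2 - c * ⅟2 + (1 - c) * (1 - c * ⅟2) * (-(2 * s)) * (1 - c) * (1 - c * ⅟2)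
      = (3 - c - (1 - c) * (2 - c) * s * ((1 - c) * (2 - c))) * ⅟2 := by
  have halve : 1 - c * ⅟2 = (2 - c) * ⅟2 := by rw [sub_mul, mul_invOf_self]
  rw [halve]
  simp only [mul_assoc, neg_mul, mul_neg, invOf_mul_cancel_left]
  noncomm_ring

end

open SepExchange in
/-- If `2` is invertible and `a - a³` is regular with inner inverse `s`, then
`c = 1 + a` is regular with inner inverse
`3/2 - c/2 + (1-c)(1-c/2)(-2s)(1-c)(1-c/2)`. -/
theorem stmt2 (R : Type) [Ring R] [Invertible (2 : R)] (a s : R)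
    (h : a - a ^ 3 = (a - a ^ 3) * s * (a - a ^ 3)) (c : R) (hc : c = 1 + a) :
    c = c * ((3 : R) * ⅟(2 : R) - c * ⅟(2 : R) +
      (1 - c) * (1 - c * ⅟(2 : R)) * (-(2 * s)) * (1 - c) * (1 - c * ⅟(2 : R))) * c := by
  rw [three_mul_invOf_two_sub_add_eq_mul_invOf_two]
  apply eq_mul_mul_invOf_two_mul
  subst hc
  have cubic : (1 + a) * (3 - (1 + a)) * (1 + a) = 2 * (1 + a) + (a - a ^ 3) := by noncomm_ring
  have left : (1 + a) * ((1 - (1 + a)) * (2 - (1 + a))) = -(a - a ^ 3) := by noncomm_ring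
  have right : (1 - (1 + a)) * (2 - (1 + a)) * (1 + a) = -(a - a ^ 3) := by noncomm_ring
  exact eq_mul_sub_mul_mul_mul_of_defect h cubic left right
end
end

section
/- Let R be a ring, a ∈ R with a = axa and b = 1 - a with b = byb. Set e = 1 - xa and f = 1 - yb. Then the element g = (1-e)fa(1-e) is an idempotent satisfying eg = ge = 0, and consequently eR + fR = (e+g)R with e+g an idempotent. -/
noncomputable section

/-!
With `p = xa = 1 - e`, regularity of `a` gives `e² = e` and `ae = 0`, and regularity of
`1 - a` gives `f² = f` and `af = f`. As `ap = a`, `g = pfa`, so `g² = pf(ap)fa = pf(af)a = g`,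
while `ep = 0` and `ae = 0` kill `eg` and `ge`. Finally `(e + g)e = e`,
`(e + g)f = ef + pf = f` and `e + g = e(1 - fa) + fa`, so `e + g` generates `eR + fR`.
-/

namespace SepExchange

variable {R : Type} [Ring R]

theorem mem_rIdeal_iff {a b : R} : b ∈ rIdeal R a ↔ ∃ r, a * r = b := by
  simp only [rIdeal, Submodule.mem_span_singleton, MulOpposite.smul_eq_mul_unop]
  exact ⟨fun ⟨r, hr⟩ => ⟨r.unop, hr⟩, fun ⟨r, hr⟩ => ⟨MulOpposite.op r, hr⟩⟩

theorem rIdeal_le_iff {a : R} {I : Submodule Rᵐᵒᵖ R} : rIdeal R a ≤ I ↔ a ∈ I :=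
  Submodule.span_singleton_le_iff_mem a I

theorem mul_mem_rIdeal (a r : R) : a * r ∈ rIdeal R a :=
  mem_rIdeal_iff.2 ⟨r, rfl⟩

theorem isIdempotentElem_mul_of_mul_mul_eq {a x : R} (h : a * x * a = a) :
    IsIdempotentElem (x * a) := by
  rw [IsIdempotentElem, mul_assoc, ← mul_assoc a, h]

theorem mul_one_sub_mul_eq_zero {a x : R} (h : a * x * a = a) : a * (1 - x * a) = 0 := by
  rw [mul_sub, mul_one, ← mul_assoc, h, sub_self]

section Idempotents

variable {a e f : R}

theorem one_sub_mul_mul_mul_one_sub_eq (hae : a * e = 0) :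
    (1 - e) * f * a * (1 - e) = (1 - e) * f * a := by
  rw [mul_sub, mul_one, mul_assoc _ a e, hae, mul_zero, sub_zero]

theorem isIdempotentElem_one_sub_mul_mul_mul_one_sub (hf : IsIdempotentElem f)
    (hae : a * e = 0) (haf : a * f = f) :
    IsIdempotentElem ((1 - e) * f * a * (1 - e)) := by
  rw [one_sub_mul_mul_mul_one_sub_eq hae, IsIdempotentElem]
  calc (1 - e) * f * a * ((1 - e) * f * a)
      = (1 - e) * f * (a * (1 - e)) * f * a := by noncomm_ring
    _ = (1 - e) * f * (a * f) * a := by rw [mul_sub, mul_one, hae, sub_zero, mul_assoc _ a f]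
    _ = (1 - e) * f * a := by rw [haf, mul_assoc _ f f, hf.eq]

theorem mul_one_sub_mul_mul_mul_one_sub_eq_zero (he : IsIdempotentElem e) :
    e * ((1 - e) * f * a * (1 - e)) = 0 := by
  simp only [← mul_assoc, he.mul_one_sub_self, zero_mul]

theorem one_sub_mul_mul_mul_one_sub_mul_eq_zero (he : IsIdempotentElem e) :
    (1 - e) * f * a * (1 - e) * e = 0 := by
  rw [mul_assoc _ (1 - e) e, he.one_sub_mul_self, mul_zero]

theorem rIdeal_sup_eq_rIdeal_add (he : IsIdempotentElem e) (hf : IsIdempotentElem f)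
    (hae : a * e = 0) (haf : a * f = f) :
    rIdeal R e ⊔ rIdeal R f = rIdeal R (e + (1 - e) * f * a * (1 - e)) := by
  rw [one_sub_mul_mul_mul_one_sub_eq hae]
  apply le_antisymm
  · refine sup_le (rIdeal_le_iff.2 (mem_rIdeal_iff.2 ⟨e, ?_⟩))
      (rIdeal_le_iff.2 (mem_rIdeal_iff.2 ⟨f, ?_⟩))
    · rw [add_mul, he.eq, mul_assoc _ a e, hae, mul_zero, add_zero]
    · rw [add_mul, mul_assoc _ a f, haf, mul_assoc _ f f, hf.eq]
      noncomm_ring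
  · have hsum : e + (1 - e) * f * a = e * (1 - f * a) + f * a := by noncomm_ring
    rw [rIdeal_le_iff, hsum]
    exact Submodule.add_mem_sup (mul_mem_rIdeal e _) (mul_mem_rIdeal f a)

end Idempotents

end SepExchange

open SepExchange in
/-- With `a = axa`, `b = 1 - a = byb`, `e = 1 - xa`, `f = 1 - yb`, the element
`g = (1-e)fa(1-e)` is an idempotent with `eg = ge = 0`, and
`eR + fR = (e+g)R` with `e + g` an idempotent. -/
theorem stmt3 (R : Type) [Ring R] (a x y e f g : R)
    (ha : a = a * x * a) (hb : (1 - a) = (1 - a) * y * (1 - a))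
    (he : e = 1 - x * a) (hf : f = 1 - y * (1 - a))
    (hg : g = (1 - e) * f * a * (1 - e)) :
    IsIdempotentElem g ∧ e * g = 0 ∧ g * e = 0 ∧
      rIdeal R e ⊔ rIdeal R f = rIdeal R (e + g) ∧ IsIdempotentElem (e + g) := by
  have he_idem : IsIdempotentElem e := he ▸ (isIdempotentElem_mul_of_mul_mul_eq ha.symm).one_sub
  have hf_idem : IsIdempotentElem f := hf ▸ (isIdempotentElem_mul_of_mul_mul_eq hb.symm).one_sub
  have hae : a * e = 0 := he ▸ mul_one_sub_mul_eq_zero ha.symm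
  have haf : a * f = f := by
    have hbf : (1 - a) * f = 0 := hf ▸ mul_one_sub_mul_eq_zero hb.symm
    rwa [sub_mul, one_mul, sub_eq_zero, eq_comm] at hbf
  have heg : e * g = 0 := hg ▸ mul_one_sub_mul_mul_mul_one_sub_eq_zero he_idem
  have hge : g * e = 0 := hg ▸ one_sub_mul_mul_mul_one_sub_mul_eq_zero he_idem
  have hg_idem : IsIdempotentElem g :=
    hg ▸ isIdempotentElem_one_sub_mul_mul_mul_one_sub hf_idem hae haf
  refine ⟨hg_idem, heg, hge, hg ▸ rIdeal_sup_eq_rIdeal_add he_idem hf_idem hae haf, ?_⟩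
  exact he_idem.add hg_idem (by rw [heg, hge, add_zero])
end
end

section
/- Let V be an infinite-dimensional vector space over the field ℤ/3ℤ, R = M₃(End(V)), and a ∈ R the 3×3 matrix with a₁₂ = 1, a₃₃ = 1 and all other entries 0. Then a² = a³, and Rar(a²) = ℓ(a²)aR = R(a-a³)R as two-sided ideals of R. -/
/-! `a = e₀₁ + e₂₂` is a square-zero matrix unit plus an orthogonal idempotent, so
`a² = a³ = e₂₂` and `a - a³ = e₀₁`. The matrix unit `e₀₁` lies in all three ideals
(`e₀₁ = a e₁₁` with `a² e₁₁ = 0`, and `e₀₁ = e₀₀ a` with `e₀₀ a² = 0`), and a single matrix unit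
generates the whole matrix ring as a two-sided ideal, so all three ideals are `⊤`. -/

noncomputable section

namespace Matrix

variable {n α : Type*} [Fintype n] [DecidableEq n] [Ring α]

theorem twoSidedIdeal_eq_top_of_single_one_mem (I : TwoSidedIdeal (Matrix n n α)) {i j : n}
    (h : single i j (1 : α) ∈ I) : I = ⊤ := by
  refine I.eq_top ?_
  rw [← sum_single_one]
  refine sum_mem fun k _ => ?_
  simpa using I.mul_mem_right _ (single j k 1) (I.mul_mem_left (single k i 1) _ h)

end Matrix

section SquareZeroPlusIdempotent

variable {R : Type*} [Ring R] {n e : R}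

theorem add_sq_eq_of_orthogonal (hn : n * n = 0) (hne : n * e = 0) (hen : e * n = 0)
    (he : IsIdempotentElem e) : (n + e) ^ 2 = e := by
  simp only [sq, add_mul, mul_add, hn, hne, hen, he.eq, zero_add]

theorem add_pow_three_eq_of_orthogonal (hn : n * n = 0) (hne : n * e = 0) (hen : e * n = 0)
    (he : IsIdempotentElem e) : (n + e) ^ 3 = e := by
  rw [pow_succ, add_sq_eq_of_orthogonal hn hne hen he, mul_add, hen, he.eq, zero_add]

end SquareZeroPlusIdempotent

open SepExchange in
theorem stmt19_general (V : Type) [AddCommGroup V] [Module (ZMod 3) V]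
    (a : Matrix (Fin 3) (Fin 3) (Module.End (ZMod 3) V))
    (ha : a = fun i j => if (i = 0 ∧ j = 1) ∨ (i = 2 ∧ j = 2) then 1 else 0) :
    a ^ 2 = a ^ 3 ∧
    TwoSidedIdeal.span
        {x : Matrix (Fin 3) (Fin 3) (Module.End (ZMod 3) V) |
          ∃ t, x = a * t ∧ a ^ 2 * t = 0} =
      TwoSidedIdeal.span
        {x : Matrix (Fin 3) (Fin 3) (Module.End (ZMod 3) V) |
          ∃ u, x = u * a ∧ u * a ^ 2 = 0} ∧
    TwoSidedIdeal.span
        {x : Matrix (Fin 3) (Fin 3) (Module.End (ZMod 3) V) |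
          ∃ u, x = u * a ∧ u * a ^ 2 = 0} =
      TwoSidedIdeal.span ({a - a ^ 3} :
        Set (Matrix (Fin 3) (Fin 3) (Module.End (ZMod 3) V))) := by
  set n : Matrix (Fin 3) (Fin 3) (Module.End (ZMod 3) V) := Matrix.single 0 1 1
  set e : Matrix (Fin 3) (Fin 3) (Module.End (ZMod 3) V) := Matrix.single 2 2 1
  have ha' : a = n + e := by
    subst ha; ext i j : 1; fin_cases i <;> fin_cases j <;> simp [n, e]
  have hn : n * n = 0 := by simp [n]
  have hne : n * e = 0 := by simp [n, e]
  have hen : e * n = 0 := by simp [n, e]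
  have he : IsIdempotentElem e := by simp [IsIdempotentElem, e]
  have hsq := add_sq_eq_of_orthogonal hn hne hen he
  have hcube := add_pow_three_eq_of_orthogonal hn hne hen he
  rw [← ha'] at hsq hcube
  have hn_mem_r : n ∈ TwoSidedIdeal.span {x | ∃ t, x = a * t ∧ a ^ 2 * t = 0} :=
    TwoSidedIdeal.subset_span
      ⟨Matrix.single 1 1 1, by simp [ha', n, e, add_mul], by simp [hsq, e]⟩
  have hn_mem_l : n ∈ TwoSidedIdeal.span {x | ∃ u, x = u * a ∧ u * a ^ 2 = 0} :=
    TwoSidedIdeal.subset_span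
      ⟨Matrix.single 0 0 1, by simp [ha', n, e, mul_add], by simp [hsq, e]⟩
  have hn_mem_sub : n ∈ TwoSidedIdeal.span {a - a ^ 3} :=
    TwoSidedIdeal.subset_span (by rw [hcube, ha', add_sub_cancel_right]; rfl)
  refine ⟨hsq.trans hcube.symm, ?_, ?_⟩
  · rw [Matrix.twoSidedIdeal_eq_top_of_single_one_mem _ hn_mem_r,
      Matrix.twoSidedIdeal_eq_top_of_single_one_mem _ hn_mem_l]
  · rw [Matrix.twoSidedIdeal_eq_top_of_single_one_mem _ hn_mem_l,
      Matrix.twoSidedIdeal_eq_top_of_single_one_mem _ hn_mem_sub]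

open SepExchange in
/-- Example 3.6: for an infinite-dimensional `ℤ/3`-vector space `V`,
`R = M₃(End V)` and `a` the matrix with `a₁₂ = 1`, `a₃₃ = 1` and zeros
elsewhere, one has `a² = a³` and `Rar(a²) = ℓ(a²)aR = R(a-a³)R`. -/
theorem stmt19 (V : Type) [AddCommGroup V] [Module (ZMod 3) V]
    (hV : ¬ Module.Finite (ZMod 3) V)
    (a : Matrix (Fin 3) (Fin 3) (Module.End (ZMod 3) V))
    (ha : a = fun i j => if (i = 0 ∧ j = 1) ∨ (i = 2 ∧ j = 2) then 1 else 0) :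
    a ^ 2 = a ^ 3 ∧
    TwoSidedIdeal.span
        {x : Matrix (Fin 3) (Fin 3) (Module.End (ZMod 3) V) |
          ∃ t, x = a * t ∧ a ^ 2 * t = 0} =
      TwoSidedIdeal.span
        {x : Matrix (Fin 3) (Fin 3) (Module.End (ZMod 3) V) |
          ∃ u, x = u * a ∧ u * a ^ 2 = 0} ∧
    TwoSidedIdeal.span
        {x : Matrix (Fin 3) (Fin 3) (Module.End (ZMod 3) V) |
          ∃ u, x = u * a ∧ u * a ^ 2 = 0} =
      TwoSidedIdeal.span ({a - a ^ 3} :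
        Set (Matrix (Fin 3) (Fin 3) (Module.End (ZMod 3) V))) :=
  stmt19_general V a ha
end
end
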